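/- arXiv:math/0405442 — 3 statements merged into one kernel-verified Lean document; each statement's English description precedes it below -/
import Mathlib

section
/- Let p be a prime and g ≥ 1 an integer. Let a_0, b_2, …, b_g be nonzero complex numbers, set b_1 := p, and assume a_0² · ∏_{i=1}^g b_i = p^{g(g+1)/2}. Then 𝔪_{p,g} = 1 and 𝔪_p²/(p+1)² + Σ_{i=1}^g Y_i · 𝔪_{p,i} = 0. -/
/-!
Put `S n := p^{-n(n+1)/2} ∑ᵢ Yᵢ R_n(i)`. The recurrence defining `Y` reads
`p S_n + (1 + p²) S_{n-1} + p S_{n-2} = -2`, whose characteristic roots are `-p⁻¹` and `-p`, so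
`S_n = ((-p⁻¹)ⁿ + (-p)ⁿ - 2) / (p + 1)²`. Exchanging the order of summation,
`∑ᵢ Yᵢ 𝔪_{p,i} = a₀² ∑_{j<k} S_{k-j} e_j e_k`, and since `(-p⁻¹)(-p) = 1` this equals
`a₀² (E(-p⁻¹) E(-p) - E(1)²) / (p + 1)²` for `E(x) = ∑ e_j xʲ = ∏ (1 + b_i x)`.
As `b₁ = p`, `E(-p⁻¹) = 0`, while `a₀² E(1)² = 𝔪_p²`.
For `i = g` only the term `j = 0, k = g` survives and `R_g(g) = 1`, so
`𝔪_{p,g} = a₀² e_g p^{-g(g+1)/2} = 1`.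
-/

/-- `R p n i` is the number of symmetric `n × n` matrices with entries in `𝔽_p = ZMod p`
whose rank equals `n - i`. -/
noncomputable def symmRankCount (p n i : ℕ) : ℕ :=
  Nat.card {A : Matrix (Fin n) (Fin n) (ZMod p) // A.IsSymm ∧ A.rank = n - i}

open Finset

theorem Matrix.eq_zero_of_rank_eq_zero {m n K : Type*} [Fintype n] [DecidableEq n] [Field K]
    {A : Matrix m n K} (h : A.rank = 0) : A = 0 := by
  rw [Matrix.rank, Submodule.finrank_eq_zero, LinearMap.range_eq_bot] at h
  ext i j
  simpa [Matrix.mulVec_single] using congr_fun (LinearMap.congr_fun h (Pi.single j 1)) i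

theorem symmRankCount_self {p : ℕ} (hp : p.Prime) (n : ℕ) : symmRankCount p n n = 1 := by
  have : Fact p.Prime := ⟨hp⟩
  rw [symmRankCount, Nat.card_eq_one_iff_exists]
  refine ⟨⟨0, Matrix.isSymm_zero, by rw [Matrix.rank_zero, Nat.sub_self]⟩, ?_⟩
  rintro ⟨A, -, hA⟩
  exact Subtype.ext (Matrix.eq_zero_of_rank_eq_zero (hA.trans (Nat.sub_self n)))

theorem sum_powersetCard_prod_mul_pow {ι R : Type*} [CommSemiring R] (s : Finset ι)
    (b : ι → R) (x : R) :
    ∑ m ∈ range (#s + 1), (∑ I ∈ s.powersetCard m, ∏ i ∈ I, b i) * x ^ m =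
      ∏ i ∈ s, (1 + b i * x) := by
  rw [prod_one_add, sum_powerset]
  refine sum_congr rfl fun m _ => ?_
  rw [sum_mul]
  refine sum_congr rfl fun I hI => ?_
  rw [prod_mul_distrib, prod_const, (mem_powersetCard.mp hI).2]

/-- `-q⁻¹` and `-q` are the roots of `q x² + (1 + q²) x + q`, and `-2 / (q + 1)²` is the constant
solution of the inhomogeneous recurrence. -/
theorem closed_form_of_recurrence {K : Type*} [Field K] {q : K} (hq : q ≠ 0) (hq1 : q + 1 ≠ 0)
    {S : ℕ → K} (h0 : S 0 = 0) (h1 : S 1 = -q⁻¹)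
    (hrec : ∀ n, (1 + q ^ 2) * S (n + 1) + q * S (n + 2) + q * S n + 2 = 0) (n : ℕ) :
    S n = ((-q⁻¹) ^ n + (-q) ^ n - 2) / (q + 1) ^ 2 := by
  induction n using Nat.twoStepInduction with
  | zero => rw [h0]; ring
  | one =>
    rw [h1]
    field_simp
    ring
  | more n ih0 ih1 =>
    have h := hrec n
    rw [ih0, ih1] at h
    simp only [pow_succ _ (n + 1), pow_succ _ n] at h ⊢
    field_simp at h ⊢
    linear_combination h

theorem pow_mul_pow_of_mul_eq_one {R : Type*} [CommMonoid R] {u v : R} (huv : u * v = 1)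
    {j m : ℕ} (hj : j ≤ m) : u ^ m * v ^ j = u ^ (m - j) := by
  rw [← Nat.sub_add_cancel hj, pow_add, mul_assoc, ← mul_pow, huv, one_pow, mul_one,
    Nat.add_sub_cancel]

theorem sum_mul_pow_mul_sum_mul_pow_of_mul_eq_one {R : Type*} [CommRing R] {u v : R}
    (huv : u * v = 1) (c : ℕ → R) (N : ℕ) :
    (∑ j ∈ range (N + 1), c j * u ^ j) * (∑ k ∈ range (N + 1), c k * v ^ k) =
      (∑ j ∈ range (N + 1), c j) ^ 2 +
        ∑ j ∈ range (N + 1), ∑ k ∈ Icc (j + 1) N, c j * c k * (u ^ (k - j) + v ^ (k - j) - 2) := by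
  induction N with
  | zero => simp [sq]
  | succ N ih =>
    have hvu : v * u = 1 := by rw [mul_comm, huv]
    have hnew : ∑ j ∈ range (N + 1), c j * c (N + 1) * (u ^ (N + 1 - j) + v ^ (N + 1 - j) - 2) =
        c (N + 1) * u ^ (N + 1) * ∑ k ∈ range (N + 1), c k * v ^ k +
          (∑ j ∈ range (N + 1), c j * u ^ j) * (c (N + 1) * v ^ (N + 1)) -
            2 * c (N + 1) * ∑ j ∈ range (N + 1), c j := by
      rw [mul_sum, sum_mul, mul_sum, ← sum_add_distrib, ← sum_sub_distrib]
      refine sum_congr rfl fun j hj => ?_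
      have hj : j ≤ N + 1 := by rw [mem_range] at hj; omega
      rw [← pow_mul_pow_of_mul_eq_one huv hj, ← pow_mul_pow_of_mul_eq_one hvu hj]
      ring
    have hsplit : ∑ j ∈ range (N + 2), ∑ k ∈ Icc (j + 1) (N + 1),
          c j * c k * (u ^ (k - j) + v ^ (k - j) - 2) =
        ∑ j ∈ range (N + 1), ∑ k ∈ Icc (j + 1) N, c j * c k * (u ^ (k - j) + v ^ (k - j) - 2) +
          ∑ j ∈ range (N + 1), c j * c (N + 1) * (u ^ (N + 1 - j) + v ^ (N + 1 - j) - 2) := by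
      rw [sum_range_succ, Icc_eq_empty (by omega), sum_empty, add_zero, ← sum_add_distrib]
      refine sum_congr rfl fun j hj => ?_
      rw [sum_Icc_succ_top (by rw [mem_range] at hj; omega)]
    rw [sum_range_succ_mul_sum_range_succ, sum_range_succ _ (N + 1), hsplit, hnew, ih]
    have hdiag : c (N + 1) * u ^ (N + 1) * (c (N + 1) * v ^ (N + 1)) = c (N + 1) * c (N + 1) := by
      rw [mul_mul_mul_comm, ← mul_pow, huv, one_pow, mul_one]
    linear_combination hdiag

theorem sum_Icc_sum_range_sum_Icc_comm {M : Type*} [AddCommMonoid M] (g : ℕ)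
    (F : ℕ → ℕ → ℕ → M) :
    ∑ i ∈ Icc 1 g, ∑ j ∈ range (g + 1), ∑ k ∈ Icc (j + i) g, F i j k =
      ∑ j ∈ range (g + 1), ∑ k ∈ Icc (j + 1) g, ∑ i ∈ Icc 1 (k - j), F i j k := by
  rw [sum_comm]
  refine sum_congr rfl fun j _ => sum_comm' fun i k => ?_
  simp only [mem_Icc]
  omega

theorem sum_mul_sum_range_sum_Icc {R : Type*} [CommSemiring R] (g : ℕ) (Y w e : ℕ → R)
    (r : ℕ → ℕ → R) :
    ∑ i ∈ Icc 1 g, Y i *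
        ∑ j ∈ range (g + 1), ∑ k ∈ Icc (j + i) g, r (k - j) i * w (k - j) * e j * e k =
      ∑ j ∈ range (g + 1), ∑ k ∈ Icc (j + 1) g,
        (∑ i ∈ Icc 1 (k - j), Y i * r (k - j) i) * w (k - j) * e j * e k := by
  simp only [mul_sum, sum_mul]
  rw [sum_Icc_sum_range_sum_Icc_comm]
  exact sum_congr rfl fun _ _ => sum_congr rfl fun _ _ => sum_congr rfl fun _ _ => by ring

theorem sum_range_sum_Icc_add_self {M : Type*} [AddCommMonoid M] (g : ℕ) (F : ℕ → ℕ → M) :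
    ∑ j ∈ range (g + 1), ∑ k ∈ Icc (j + g) g, F j k = F 0 g := by
  rw [sum_eq_single_of_mem 0 (by simp) fun j _ hj => by rw [Icc_eq_empty (by omega), sum_empty]]
  simp

theorem sum_sum_Icc_mul_eq_neg_sq {K : Type*} [Field K] {q : K} (hq : q ≠ 0) (e : ℕ → K) (N : ℕ)
    (hroot : ∑ j ∈ range (N + 1), e j * (-q⁻¹) ^ j = 0) :
    ∑ j ∈ range (N + 1), ∑ k ∈ Icc (j + 1) N, e j * e k * ((-q⁻¹) ^ (k - j) + (-q) ^ (k - j) - 2) =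
      -(∑ j ∈ range (N + 1), e j) ^ 2 := by
  have huv : -q⁻¹ * -q = 1 := by rw [neg_mul_neg, inv_mul_cancel₀ hq]
  linear_combination -sum_mul_pow_mul_sum_mul_pow_of_mul_eq_one huv e N +
    (∑ k ∈ range (N + 1), e k * (-q) ^ k) * hroot

theorem sum_mul_symmRankCount_mul_inv_eq {K : Type*} [Field K] [CharZero K] {p : ℕ}
    (hp : p.Prime) {Y : ℕ → K} (hY1 : Y 1 = -1)
    (hYrec : ∀ n, 2 ≤ n →
      (∑ i ∈ Icc 1 (n - 1), Y i * (symmRankCount p (n - 1) i : K)) * (1 + (p : K) ^ 2) *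
          ((p : K) ^ ((n - 1) * n / 2))⁻¹ +
        (∑ i ∈ Icc 1 n, Y i * (symmRankCount p n i : K)) * (p : K) *
          ((p : K) ^ (n * (n + 1) / 2))⁻¹ +
        (∑ i ∈ Icc 1 (n - 2), Y i * (symmRankCount p (n - 2) i : K)) * (p : K) *
          ((p : K) ^ ((n - 2) * (n - 1) / 2))⁻¹ + 2 = 0) (n : ℕ) :
    (∑ i ∈ Icc 1 n, Y i * (symmRankCount p n i : K)) * ((p : K) ^ (n * (n + 1) / 2))⁻¹ =
      ((-(p : K)⁻¹) ^ n + (-(p : K)) ^ n - 2) / ((p : K) + 1) ^ 2 := by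
  refine closed_form_of_recurrence (by exact_mod_cast hp.ne_zero)
    (by exact_mod_cast p.succ_ne_zero)
    (S := fun n => (∑ i ∈ Icc 1 n, Y i * (symmRankCount p n i : K)) *
      ((p : K) ^ (n * (n + 1) / 2))⁻¹)
    (by simp) (by simp [hY1, symmRankCount_self hp]) (fun n => ?_) n
  have h := hYrec (n + 2) (by omega)
  rw [show n + 2 - 1 = n + 1 by omega, show n + 2 - 2 = n by omega] at h
  linear_combination h

theorem stmt_0_general (p : ℕ) (hp : p.Prime) (g : ℕ) (hg : 1 ≤ g)
    (a0 : ℂ) (b : ℕ → ℂ)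
    (hb1 : b 1 = (p : ℂ))
    (hrel : a0 ^ 2 * ∏ i ∈ Finset.Icc 1 g, b i = (p : ℂ) ^ (g * (g + 1) / 2))
    (Y : ℕ → ℂ) (hY1 : Y 1 = -1)
    (hYrec : ∀ n, 2 ≤ n →
      (∑ i ∈ Finset.Icc 1 (n - 1), Y i * (symmRankCount p (n - 1) i : ℂ)) * (1 + (p : ℂ) ^ 2) *
          ((p : ℂ) ^ ((n - 1) * n / 2))⁻¹ +
        (∑ i ∈ Finset.Icc 1 n, Y i * (symmRankCount p n i : ℂ)) * (p : ℂ) *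
          ((p : ℂ) ^ (n * (n + 1) / 2))⁻¹ +
        (∑ i ∈ Finset.Icc 1 (n - 2), Y i * (symmRankCount p (n - 2) i : ℂ)) * (p : ℂ) *
          ((p : ℂ) ^ ((n - 2) * (n - 1) / 2))⁻¹ + 2 = 0) :
    let e : ℕ → ℂ := fun m => ∑ I ∈ (Finset.Icc 1 g).powersetCard m, ∏ i ∈ I, b i
    let mp : ℂ := a0 * ∏ i ∈ Finset.Icc 1 g, (1 + b i)
    let mpi : ℕ → ℂ := fun i => a0 ^ 2 *
      ∑ j ∈ Finset.range (g + 1), ∑ k ∈ Finset.Icc (j + i) g,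
        (symmRankCount p (k - j) i : ℂ) * ((p : ℂ) ^ ((k - j) * (k - j + 1) / 2))⁻¹ * e j * e k
    mpi g = 1 ∧ mp ^ 2 / ((p : ℂ) + 1) ^ 2 + ∑ i ∈ Finset.Icc 1 g, Y i * mpi i = 0 := by
  intro e mp mpi
  have hq : (p : ℂ) ≠ 0 := by exact_mod_cast hp.ne_zero
  have hcard : #(Icc 1 g) = g := by simp
  have he : ∀ x, ∑ j ∈ range (g + 1), e j * x ^ j = ∏ i ∈ Icc 1 g, (1 + b i * x) :=
    fun x => by simpa only [hcard] using sum_powersetCard_prod_mul_pow (Icc 1 g) b x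
  constructor
  · have heg : e g = ∏ i ∈ Icc 1 g, b i := by
      have h := powersetCard_self (Icc 1 g)
      rw [hcard] at h
      simp [e, h]
    simp only [mpi, sum_range_sum_Icc_add_self, Nat.sub_zero, symmRankCount_self hp, heg, e,
      powersetCard_zero, sum_singleton, prod_empty, Nat.cast_one, one_mul, mul_one]
    rw [mul_comm _ (∏ i ∈ Icc 1 g, b i), ← mul_assoc, hrel, mul_inv_cancel₀ (pow_ne_zero _ hq)]
  · have hroot : ∑ j ∈ range (g + 1), e j * (-(p : ℂ)⁻¹) ^ j = 0 := by
      rw [he]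
      exact prod_eq_zero (i := 1) (by simp [hg]) (by rw [hb1, mul_neg, mul_inv_cancel₀ hq]; ring)
    have hprod : ∑ j ∈ range (g + 1), e j = ∏ i ∈ Icc 1 g, (1 + b i) := by simpa using he 1
    calc mp ^ 2 / ((p : ℂ) + 1) ^ 2 + ∑ i ∈ Icc 1 g, Y i * mpi i
        = mp ^ 2 / ((p : ℂ) + 1) ^ 2 + a0 ^ 2 / ((p : ℂ) + 1) ^ 2 *
            ∑ j ∈ range (g + 1), ∑ k ∈ Icc (j + 1) g,
              e j * e k * ((-(p : ℂ)⁻¹) ^ (k - j) + (-(p : ℂ)) ^ (k - j) - 2) := by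
          have hswap := sum_mul_sum_range_sum_Icc g Y
            (fun m => ((p : ℂ) ^ (m * (m + 1) / 2))⁻¹) e fun m i => (symmRankCount p m i : ℂ)
          simp only [mpi, mul_left_comm (Y _) (a0 ^ 2), ← mul_sum] at hswap ⊢
          rw [hswap]
          simp only [sum_mul_symmRankCount_mul_inv_eq hp hY1 hYrec, mul_sum]
          exact congrArg _ (sum_congr rfl fun j _ => sum_congr rfl fun k _ => by ring)
      _ = 0 := by
          rw [sum_sum_Icc_mul_eq_neg_sq hq e g hroot, hprod]
          ring

theorem stmt_0 (p : ℕ) (hp : p.Prime) (g : ℕ) (hg : 1 ≤ g)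
    (a0 : ℂ) (b : ℕ → ℂ) (ha0 : a0 ≠ 0)
    (hbne : ∀ i ∈ Finset.Icc 2 g, b i ≠ 0) (hb1 : b 1 = (p : ℂ))
    (hrel : a0 ^ 2 * ∏ i ∈ Finset.Icc 1 g, b i = (p : ℂ) ^ (g * (g + 1) / 2))
    (Y : ℕ → ℂ) (hY1 : Y 1 = -1)
    (hYrec : ∀ n, 2 ≤ n →
      (∑ i ∈ Finset.Icc 1 (n - 1), Y i * (symmRankCount p (n - 1) i : ℂ)) * (1 + (p : ℂ) ^ 2) *
          ((p : ℂ) ^ ((n - 1) * n / 2))⁻¹ +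
        (∑ i ∈ Finset.Icc 1 n, Y i * (symmRankCount p n i : ℂ)) * (p : ℂ) *
          ((p : ℂ) ^ (n * (n + 1) / 2))⁻¹ +
        (∑ i ∈ Finset.Icc 1 (n - 2), Y i * (symmRankCount p (n - 2) i : ℂ)) * (p : ℂ) *
          ((p : ℂ) ^ ((n - 2) * (n - 1) / 2))⁻¹ + 2 = 0) :
    let e : ℕ → ℂ := fun m => ∑ I ∈ (Finset.Icc 1 g).powersetCard m, ∏ i ∈ I, b i
    let mp : ℂ := a0 * ∏ i ∈ Finset.Icc 1 g, (1 + b i)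
    let mpi : ℕ → ℂ := fun i => a0 ^ 2 *
      ∑ j ∈ Finset.range (g + 1), ∑ k ∈ Finset.Icc (j + i) g,
        (symmRankCount p (k - j) i : ℂ) * ((p : ℂ) ^ ((k - j) * (k - j + 1) / 2))⁻¹ * e j * e k
    mpi g = 1 ∧ mp ^ 2 / ((p : ℂ) + 1) ^ 2 + ∑ i ∈ Finset.Icc 1 g, Y i * mpi i = 0 :=
  stmt_0_general p hp g hg a0 b hb1 hrel Y hY1 hYrec
end

section
/- Let k ≥ 1 and 𝔟_1,…,𝔟_k ≥ 1 be integers, g = 𝔟_1+⋯+𝔟_k, m_l = 𝔟_1+⋯+𝔟_{l−1}, and let 0 ≤ c_l ≤ 𝔟_l with c_1 = 0; set I := ∪_{l=1}^k {m_l+1,…,m_l+c_l} and s := c_1+⋯+c_k. Then the number of pairs (i,j) with 1 ≤ i ≤ j ≤ g, i ∉ I, j ∉ I, and not both i and j in the first block {1,…,𝔟_1}, plus the number of pairs (i,j) with 1 ≤ i < j ≤ g, i ∈ I, j ∉ I and blk(i) ≠ blk(j), equals (g−s)(g+1−s)/2 + Σ_{2 ≤ l < l' ≤ k} c_l 𝔟_{l'}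 − Σ_{1 ≤ l < l' ≤ k} c_l c_{l'} − 𝔟_1(𝔟_1+1)/2. -/
/-!
Write `m l` for the start of block `l`, so that block `l` is `(m l, m (l + 1)]` and the part of
`I` inside it is `(m l, m l + c l]`. The complement `S = [1, g] \ I` has `g - s` elements and,
since `c 1 = 0`, contains the first block `[1, 𝔟 1]`. The first set consists of the pairs
`i ≤ j` in `S` that do not both lie in the first block, so twice its size is
`(g - s)(g - s + 1) - 𝔟 1 (𝔟 1 + 1)`. A pair `(i, j)` of the second set is the same as a marked `i`
in some block `l` together with an unmarked `j` in a later block, so the second set has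
`∑ l, c l * ∑ l' > l, (𝔟 l' - c l')` elements.
-/

open Finset

theorem two_mul_card_filter_le_product_self {α : Type*} [LinearOrder α] (S : Finset α) :
    2 * #{q ∈ S ×ˢ S | q.1 ≤ q.2} = #S * (#S + 1) := by
  have h_swap : #{q ∈ S ×ˢ S | q.1 ≤ q.2} = #{q ∈ S ×ˢ S | q.2 ≤ q.1} :=
    card_nbij' Prod.swap Prod.swap (by intro q; simp +contextual)
      (by intro q; simp +contextual) (fun _ _ => rfl) (fun _ _ => rfl)
  have h_union : {q ∈ S ×ˢ S | q.1 ≤ q.2} ∪ {q ∈ S ×ˢ S | q.2 ≤ q.1} = S ×ˢ S := by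
    rw [← filter_or]
    exact filter_true_of_mem fun q _ => le_total q.1 q.2
  have h_inter : {q ∈ S ×ˢ S | q.1 ≤ q.2} ∩ {q ∈ S ×ˢ S | q.2 ≤ q.1} = S.diag := by
    rw [← filter_and]
    ext ⟨i, j⟩
    simp only [mem_filter, mem_product, mem_diag]
    grind
  have h_card := card_union_add_card_inter {q ∈ S ×ˢ S | q.1 ≤ q.2} {q ∈ S ×ˢ S | q.2 ≤ q.1}
  rw [h_union, h_inter, card_product, diag_card, ← h_swap] at h_card
  linarith

theorem two_mul_card_filter_le_not_both_mem_add {α : Type*} [LinearOrder α] {B S : Finset α}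
    (hBS : B ⊆ S) :
    2 * #{q ∈ S ×ˢ S | q.1 ≤ q.2 ∧ ¬(q.1 ∈ B ∧ q.2 ∈ B)} + #B * (#B + 1) = #S * (#S + 1) := by
  have h_sub : {q ∈ B ×ˢ B | q.1 ≤ q.2} ⊆ {q ∈ S ×ˢ S | q.1 ≤ q.2} :=
    filter_subset_filter _ (product_subset_product hBS hBS)
  have h_sdiff : {q ∈ S ×ˢ S | q.1 ≤ q.2 ∧ ¬(q.1 ∈ B ∧ q.2 ∈ B)} =
      {q ∈ S ×ˢ S | q.1 ≤ q.2} \ {q ∈ B ×ˢ B | q.1 ≤ q.2} := by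
    ext q
    simp only [mem_filter, mem_sdiff, mem_product]
    tauto
  rw [h_sdiff, card_sdiff_of_subset h_sub, ← two_mul_card_filter_le_product_self,
    ← two_mul_card_filter_le_product_self, Nat.mul_sub, Nat.sub_add_cancel]
  exact Nat.mul_le_mul_left 2 (card_le_card h_sub)

theorem two_mul_ncard_unmarked_pairs_add (I : Set ℕ) [DecidablePred (· ∈ I)] {b g : ℕ}
    (hbg : b ≤ g) (hI : ∀ i ∈ I, b < i) :
    2 * {q : ℕ × ℕ | 1 ≤ q.1 ∧ q.1 ≤ q.2 ∧ q.2 ≤ g ∧ q.1 ∉ I ∧ q.2 ∉ I ∧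
        ¬ (q.1 ≤ b ∧ q.2 ≤ b)}.ncard + b * (b + 1)
      = #{i ∈ Icc 1 g | i ∉ I} * (#{i ∈ Icc 1 g | i ∉ I} + 1) := by
  set S := {i ∈ Icc 1 g | i ∉ I}
  have h_set : {q : ℕ × ℕ | 1 ≤ q.1 ∧ q.1 ≤ q.2 ∧ q.2 ≤ g ∧ q.1 ∉ I ∧ q.2 ∉ I ∧
      ¬ (q.1 ≤ b ∧ q.2 ≤ b)} = ↑{q ∈ S ×ˢ S | q.1 ≤ q.2 ∧ ¬(q.1 ∈ Icc 1 b ∧ q.2 ∈ Icc 1 b)} := by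
    ext ⟨i, j⟩
    simp only [S, Set.mem_ofPred_eq, coe_filter, mem_product, mem_filter, mem_Icc]
    constructor
    · rintro ⟨hi, hij, hj, hiI, hjI, hb⟩
      exact ⟨⟨⟨⟨hi, by omega⟩, hiI⟩, ⟨by omega, hj⟩, hjI⟩, hij, by omega⟩
    · rintro ⟨⟨⟨⟨hi, -⟩, hiI⟩, ⟨-, hj⟩, hjI⟩, hij, hb⟩
      exact ⟨hi, hij, hj, hiI, hjI, by omega⟩
  have hB : Icc 1 b ⊆ S := fun i hi => by
    simp only [S, mem_Icc, mem_filter] at hi ⊢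
    exact ⟨⟨hi.1, hi.2.trans hbg⟩, fun hiI => (hI i hiI).not_ge hi.2⟩
  rw [h_set, Set.ncard_coe_finset, ← two_mul_card_filter_le_not_both_mem_add hB, Nat.card_Icc,
    Nat.add_sub_cancel]

def blockStart (𝔟 : ℕ → ℕ) (l : ℕ) : ℕ := ∑ t ∈ Ico 1 l, 𝔟 t

def markedSet (k : ℕ) (𝔟 c : ℕ → ℕ) : Set ℕ :=
  {i | ∃ l, 1 ≤ l ∧ l ≤ k ∧ blockStart 𝔟 l + 1 ≤ i ∧ i ≤ blockStart 𝔟 l + c l}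

def SameBlock (k : ℕ) (𝔟 : ℕ → ℕ) (i j : ℕ) : Prop :=
  ∃ l, 1 ≤ l ∧ l ≤ k ∧ (blockStart 𝔟 l + 1 ≤ i ∧ i ≤ blockStart 𝔟 l + 𝔟 l) ∧
    (blockStart 𝔟 l + 1 ≤ j ∧ j ≤ blockStart 𝔟 l + 𝔟 l)

section Blocks

variable {k : ℕ} {𝔟 c : ℕ → ℕ}

@[simp]
theorem blockStart_one : blockStart 𝔟 1 = 0 := by simp [blockStart]

theorem blockStart_add_one {l : ℕ} (hl : 1 ≤ l) :
    blockStart 𝔟 (l + 1) = blockStart 𝔟 l + 𝔟 l :=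
  sum_Ico_succ_top hl _

theorem blockStart_mono : Monotone (blockStart 𝔟) := fun _ _ hab =>
  sum_le_sum_of_subset (Ico_subset_Ico_right hab)

theorem blockStart_add_one_eq_sum (k : ℕ) :
    blockStart 𝔟 (k + 1) = ∑ l ∈ Icc 1 k, 𝔟 l := by
  rw [blockStart, Ico_add_one_right_eq_Icc]

theorem le_blockStart_add_one (hk : 1 ≤ k) : 𝔟 1 ≤ blockStart 𝔟 (k + 1) := by
  simpa [blockStart_add_one] using blockStart_mono (𝔟 := 𝔟) (show 2 ≤ k + 1 by omega)

theorem eq_of_mem_Ioc_blockStart {i l l' : ℕ}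
    (h : i ∈ Ioc (blockStart 𝔟 l) (blockStart 𝔟 (l + 1)))
    (h' : i ∈ Ioc (blockStart 𝔟 l') (blockStart 𝔟 (l' + 1))) : l = l' := by
  rw [mem_Ioc] at h h'
  by_contra hne
  rcases Nat.lt_or_gt_of_ne hne with hlt | hlt
  · have := blockStart_mono (𝔟 := 𝔟) (show l + 1 ≤ l' from hlt); omega
  · have := blockStart_mono (𝔟 := 𝔟) (show l' + 1 ≤ l from hlt); omega

theorem Ioc_subset_Ioc_blockStart_add_one {l n : ℕ} (hl : 1 ≤ l) (hn : n ≤ 𝔟 l) :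
    Ioc (blockStart 𝔟 l) (blockStart 𝔟 l + n) ⊆ Ioc (blockStart 𝔟 l) (blockStart 𝔟 (l + 1)) := by
  rw [blockStart_add_one hl]
  exact Ioc_subset_Ioc_right (by omega)

theorem mem_markedSet_iff (hc : ∀ l ∈ Icc 1 k, c l ≤ 𝔟 l) {i l : ℕ} (hl : l ∈ Icc 1 k)
    (hi : i ∈ Ioc (blockStart 𝔟 l) (blockStart 𝔟 (l + 1))) :
    i ∈ markedSet k 𝔟 c ↔ i ≤ blockStart 𝔟 l + c l := by
  rw [mem_Icc] at hl
  constructor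
  · rintro ⟨t, ht1, htk, hti, hit⟩
    have hit' := Ioc_subset_Ioc_blockStart_add_one ht1 (hc t (mem_Icc.mpr ⟨ht1, htk⟩))
      (mem_Ioc.mpr ⟨hti, hit⟩)
    obtain rfl := eq_of_mem_Ioc_blockStart hit' hi
    exact hit
  · exact fun hic => ⟨l, hl.1, hl.2, (mem_Ioc.mp hi).1, hic⟩

theorem lt_of_mem_markedSet (hc1 : c 1 = 0) {i : ℕ} (hi : i ∈ markedSet k 𝔟 c) : 𝔟 1 < i := by
  obtain ⟨l, hl1, -, hli, hil⟩ := hi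
  obtain rfl | hl2 := hl1.eq_or_lt
  · simp only [blockStart_one, hc1] at hli hil
    omega
  · have := blockStart_mono (𝔟 := 𝔟) hl2
    rw [blockStart_add_one le_rfl, blockStart_one] at this
    omega

theorem card_filter_notMem_markedSet (hc : ∀ l ∈ Icc 1 k, c l ≤ 𝔟 l)
    [DecidablePred (· ∈ markedSet k 𝔟 c)] {a b : ℕ} (ha : 1 ≤ a) (hab : a ≤ b)
    (hb : b ≤ k + 1) :
    (#{i ∈ Ioc (blockStart 𝔟 a) (blockStart 𝔟 b) | i ∉ markedSet k 𝔟 c} : ℤ)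
      = ∑ l ∈ Ico a b, ((𝔟 l : ℤ) - c l) := by
  induction b, hab using Nat.le_induction with
  | base => simp
  | succ b hab ih =>
    have hb1 : 1 ≤ b := ha.trans hab
    have hbk : b ∈ Icc 1 k := mem_Icc.mpr ⟨hb1, by omega⟩
    have h_block : {i ∈ Ioc (blockStart 𝔟 b) (blockStart 𝔟 (b + 1)) | i ∉ markedSet k 𝔟 c}
        = Ioc (blockStart 𝔟 b + c b) (blockStart 𝔟 (b + 1)) := by
      ext i
      rw [mem_filter]
      constructor
      · rintro ⟨hi, hiI⟩
        rw [mem_markedSet_iff hc hbk hi] at hiI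
        rw [mem_Ioc] at hi ⊢
        omega
      · intro hi
        have hi' : i ∈ Ioc (blockStart 𝔟 b) (blockStart 𝔟 (b + 1)) := by
          rw [mem_Ioc] at hi ⊢
          omega
        rw [mem_markedSet_iff hc hbk hi']
        exact ⟨hi', by rw [mem_Ioc] at hi; omega⟩
    rw [← Ioc_union_Ioc_eq_Ioc (blockStart_mono hab) (blockStart_mono b.le_succ), filter_union,
      card_union_of_disjoint (disjoint_filter_filter (Ioc_disjoint_Ioc_of_le le_rfl)),
      h_block, Nat.card_Ioc, sum_Ico_succ_top hab, Nat.cast_add, ih (by omega),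
      blockStart_add_one hb1]
    push_cast [Nat.add_sub_add_left, Nat.cast_sub (hc b hbk)]
    ring

theorem card_Icc_filter_notMem_markedSet (hc : ∀ l ∈ Icc 1 k, c l ≤ 𝔟 l)
    [DecidablePred (· ∈ markedSet k 𝔟 c)] :
    (#{i ∈ Icc 1 (blockStart 𝔟 (k + 1)) | i ∉ markedSet k 𝔟 c} : ℤ)
      = blockStart 𝔟 (k + 1) - ∑ l ∈ Icc 1 k, (c l : ℤ) := by
  have h := card_filter_notMem_markedSet hc le_rfl (show 1 ≤ k + 1 by omega) le_rfl
  rwa [blockStart_one, ← Icc_add_one_left_eq_Ioc, zero_add, Ico_add_one_right_eq_Icc,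
    sum_sub_distrib, ← Nat.cast_sum, ← blockStart_add_one_eq_sum] at h

theorem setOf_marked_unmarked_pairs_eq_biUnion (hc : ∀ l ∈ Icc 1 k, c l ≤ 𝔟 l)
    [DecidablePred (· ∈ markedSet k 𝔟 c)] :
    {q : ℕ × ℕ | 1 ≤ q.1 ∧ q.1 < q.2 ∧ q.2 ≤ blockStart 𝔟 (k + 1) ∧
        q.1 ∈ markedSet k 𝔟 c ∧ q.2 ∉ markedSet k 𝔟 c ∧ ¬ SameBlock k 𝔟 q.1 q.2}
      = ↑((Icc 1 k).biUnion fun l => Ioc (blockStart 𝔟 l) (blockStart 𝔟 l + c l) ×ˢ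
          {j ∈ Ioc (blockStart 𝔟 (l + 1)) (blockStart 𝔟 (k + 1)) | j ∉ markedSet k 𝔟 c}) := by
  ext ⟨i, j⟩
  simp only [Set.mem_ofPred_eq, mem_coe, mem_biUnion, mem_product, mem_filter, mem_Ioc, mem_Icc]
  constructor
  · rintro ⟨-, hij, hj, ⟨l, hl1, hlk, hli, hil⟩, hjI, hnot⟩
    refine ⟨l, ⟨hl1, hlk⟩, ⟨hli, hil⟩, ⟨?_, hj⟩, hjI⟩
    by_contra hjl
    have hcl := hc l (mem_Icc.mpr ⟨hl1, hlk⟩)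
    rw [blockStart_add_one hl1] at hjl
    exact hnot ⟨l, hl1, hlk, ⟨hli, by omega⟩, ⟨by omega, by omega⟩⟩
  · rintro ⟨l, ⟨hl1, hlk⟩, ⟨hli, hil⟩, ⟨hlj, hj⟩, hjI⟩
    have hil' := Ioc_subset_Ioc_blockStart_add_one hl1 (hc l (mem_Icc.mpr ⟨hl1, hlk⟩))
      (mem_Ioc.mpr ⟨hli, hil⟩)
    rw [mem_Ioc] at hil'
    refine ⟨by omega, by omega, hj, ⟨l, hl1, hlk, hli, hil⟩, hjI, ?_⟩
    rintro ⟨t, ht1, -, ⟨hti, hit⟩, -, hjt⟩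
    rw [← blockStart_add_one ht1] at hit hjt
    obtain rfl := eq_of_mem_Ioc_blockStart (mem_Ioc.mpr ⟨by omega, hit⟩) (mem_Ioc.mpr hil')
    omega

theorem ncard_marked_unmarked_pairs (hc : ∀ l ∈ Icc 1 k, c l ≤ 𝔟 l) :
    ({q : ℕ × ℕ | 1 ≤ q.1 ∧ q.1 < q.2 ∧ q.2 ≤ blockStart 𝔟 (k + 1) ∧
        q.1 ∈ markedSet k 𝔟 c ∧ q.2 ∉ markedSet k 𝔟 c ∧ ¬ SameBlock k 𝔟 q.1 q.2}.ncard : ℤ)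
      = ∑ l ∈ Icc 1 k, (c l : ℤ) * ∑ l' ∈ Icc (l + 1) k, ((𝔟 l' : ℤ) - c l') := by
  classical
  rw [setOf_marked_unmarked_pairs_eq_biUnion hc, Set.ncard_coe_finset, card_biUnion]
  · push_cast
    refine sum_congr rfl fun l hl => ?_
    rw [mem_Icc] at hl
    rw [card_product, Nat.card_Ioc, Nat.add_sub_cancel_left, Nat.cast_mul,
      card_filter_notMem_markedSet hc (by omega) (by omega) (by omega), Ico_add_one_right_eq_Icc]
  · intro l hl l' hl' hne
    rw [Function.onFun, disjoint_product, disjoint_left]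
    exact Or.inl fun i hi hi' => hne <| eq_of_mem_Ioc_blockStart
      (Ioc_subset_Ioc_blockStart_add_one (mem_Icc.mp hl).1 (hc l hl) hi)
      (Ioc_subset_Ioc_blockStart_add_one (mem_Icc.mp hl').1 (hc l' hl') hi')

end Blocks

theorem stmt_7_general (k : ℕ) (hk : 1 ≤ k) (𝔟 c : ℕ → ℕ)
    (hc : ∀ l ∈ Finset.Icc 1 k, c l ≤ 𝔟 l) (hc1 : c 1 = 0) :
    let m : ℕ → ℕ := fun l => ∑ t ∈ Finset.Ico 1 l, 𝔟 t
    let g : ℕ := ∑ l ∈ Finset.Icc 1 k, 𝔟 l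
    let s : ℕ := ∑ l ∈ Finset.Icc 1 k, c l
    let I : Set ℕ := {i | ∃ l, 1 ≤ l ∧ l ≤ k ∧ m l + 1 ≤ i ∧ i ≤ m l + c l}
    let sameBlock : ℕ → ℕ → Prop := fun i j => ∃ l, 1 ≤ l ∧ l ≤ k ∧
      (m l + 1 ≤ i ∧ i ≤ m l + 𝔟 l) ∧ (m l + 1 ≤ j ∧ j ≤ m l + 𝔟 l)
    ({q : ℕ × ℕ | 1 ≤ q.1 ∧ q.1 ≤ q.2 ∧ q.2 ≤ g ∧ q.1 ∉ I ∧ q.2 ∉ I ∧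
            ¬ (q.1 ≤ 𝔟 1 ∧ q.2 ≤ 𝔟 1)}.ncard
        + {q : ℕ × ℕ | 1 ≤ q.1 ∧ q.1 < q.2 ∧ q.2 ≤ g ∧ q.1 ∈ I ∧ q.2 ∉ I ∧
            ¬ sameBlock q.1 q.2}.ncard : ℤ)
      = ((g : ℤ) - s) * ((g : ℤ) + 1 - s) / 2
        + ∑ l ∈ Finset.Icc 2 k, ∑ l' ∈ Finset.Icc (l + 1) k, (c l : ℤ) * (𝔟 l' : ℤ)
        - ∑ l ∈ Finset.Icc 1 k, ∑ l' ∈ Finset.Icc (l + 1) k, (c l : ℤ) * (c l' : ℤ)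
        - (𝔟 1 : ℤ) * ((𝔟 1 : ℤ) + 1) / 2 := by
  classical
  intro m g s I sameBlock
  rw [show I = markedSet k 𝔟 c from rfl, show sameBlock = SameBlock k 𝔟 from rfl,
    show g = blockStart 𝔟 (k + 1) from (blockStart_add_one_eq_sum k).symm,
    show (s : ℤ) = ∑ l ∈ Icc 1 k, (c l : ℤ) from Nat.cast_sum _ _]
  have hA := congrArg (Nat.cast : ℕ → ℤ) <| two_mul_ncard_unmarked_pairs_add (markedSet k 𝔟 c)
    (le_blockStart_add_one hk) fun _ => lt_of_mem_markedSet hc1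
  push_cast [card_Icc_filter_notMem_markedSet hc, sub_add_eq_add_sub] at hA
  have hB := ncard_marked_unmarked_pairs (k := k) hc
  have h_first_block : ∑ l ∈ Icc 1 k, ∑ l' ∈ Icc (l + 1) k, (c l : ℤ) * 𝔟 l'
      = ∑ l ∈ Icc 2 k, ∑ l' ∈ Icc (l + 1) k, (c l : ℤ) * 𝔟 l' := by
    refine (sum_subset (Icc_subset_Icc_left one_le_two) fun l hl hl2 => ?_).symm
    obtain rfl : l = 1 := by simp only [mem_Icc] at hl hl2; omega
    simp [hc1]
  simp only [mul_sub, mul_sum, sum_sub_distrib, h_first_block] at hB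
  rw [← hA, hB]
  omega

theorem stmt_7 (k : ℕ) (hk : 1 ≤ k) (𝔟 c : ℕ → ℕ)
    (h𝔟 : ∀ l ∈ Finset.Icc 1 k, 1 ≤ 𝔟 l)
    (hc : ∀ l ∈ Finset.Icc 1 k, c l ≤ 𝔟 l) (hc1 : c 1 = 0) :
    let m : ℕ → ℕ := fun l => ∑ t ∈ Finset.Ico 1 l, 𝔟 t
    let g : ℕ := ∑ l ∈ Finset.Icc 1 k, 𝔟 l
    let s : ℕ := ∑ l ∈ Finset.Icc 1 k, c l
    let I : Set ℕ := {i | ∃ l, 1 ≤ l ∧ l ≤ k ∧ m l + 1 ≤ i ∧ i ≤ m l + c l}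
    let sameBlock : ℕ → ℕ → Prop := fun i j => ∃ l, 1 ≤ l ∧ l ≤ k ∧
      (m l + 1 ≤ i ∧ i ≤ m l + 𝔟 l) ∧ (m l + 1 ≤ j ∧ j ≤ m l + 𝔟 l)
    ({q : ℕ × ℕ | 1 ≤ q.1 ∧ q.1 ≤ q.2 ∧ q.2 ≤ g ∧ q.1 ∉ I ∧ q.2 ∉ I ∧
            ¬ (q.1 ≤ 𝔟 1 ∧ q.2 ≤ 𝔟 1)}.ncard
        + {q : ℕ × ℕ | 1 ≤ q.1 ∧ q.1 < q.2 ∧ q.2 ≤ g ∧ q.1 ∈ I ∧ q.2 ∉ I ∧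
            ¬ sameBlock q.1 q.2}.ncard : ℤ)
      = ((g : ℤ) - s) * ((g : ℤ) + 1 - s) / 2
        + ∑ l ∈ Finset.Icc 2 k, ∑ l' ∈ Finset.Icc (l + 1) k, (c l : ℤ) * (𝔟 l' : ℤ)
        - ∑ l ∈ Finset.Icc 1 k, ∑ l' ∈ Finset.Icc (l + 1) k, (c l : ℤ) * (c l' : ℤ)
        - (𝔟 1 : ℤ) * ((𝔟 1 : ℤ) + 1) / 2 :=
  stmt_7_general k hk 𝔟 c hc hc1
end

section
/- Let p be a prime, g ≥ 1, 0 ≤ i ≤ g, and let A be a symmetric g×g matrix with entries in ℚ_p, written in block form A = [[u₁₁, u₁₂],[u₁₂ᵀ, u₂₂]] with u₁₁ of size (g−i)×(g−i) and u₂₂ of size i×i. Let F_i := diag(1_{g−i}, p·1_i, p·1_{g−i}, 1_i), u := [[1_g, A],[0, 1_g]] (block form with g×g blocks), and T_p := diag(1_g, p·1_g). Then F_i · u lies in the double coset GSp_{2g}(ℤ_p) · T_p · GSp_{2g}(ℤ_p) if and only if all entries of u₁₁ and u₁₂ lie in ℤ_p and all entries of p·u₂₂ lie in ℤ_p. -/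
/-!
Write `n(X) = [[1, X], [0, 1]]` and `F = diag(D₁, D₂)` with `D₁ = diag(1, p)`, `D₂ = diag(p, 1)`.
The symplectic permutation matrix `w` exchanging the last `i` coordinates of the two halves
satisfies `w T_p wᵀ = F`, and `F n(Y D₂) = n(D₁ Y) F`. Splitting `A = diag(0, u₂₂) + A'` with
`A' = [[u₁₁, u₁₂], [u₁₂ᵀ, 0]]` therefore gives
  `F u = (n(diag(0, p u₂₂)) w) T_p (wᵀ n(A'))`,
whose outer factors are integral symplectic matrices when `u₁₁`, `u₁₂` and `p u₂₂` are integral.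
Conversely, every element of the double coset has integral entries, and the upper right block
of `F u` is `[[u₁₁, u₁₂], [p u₁₂ᵀ, p u₂₂]]`.
-/

open Matrix

namespace Matrix

variable {l m n o R : Type*}

/-- For `R = ℚ_[p]` these are the matrices with entries in `ℤ_[p]`. -/
def IntegralEntries [Norm R] (M : Matrix m n R) : Prop :=
  ∀ a b, ‖M a b‖ ≤ 1

theorem integralEntries_zero [SeminormedAddCommGroup R] : (0 : Matrix m n R).IntegralEntries :=
  fun _ _ => by simp

theorem integralEntries_one [SeminormedRing R] [NormOneClass R] [DecidableEq n] :
    (1 : Matrix n n R).IntegralEntries := by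
  intro a b
  rw [one_apply]
  split_ifs <;> simp

theorem IntegralEntries.neg [SeminormedAddCommGroup R] {M : Matrix m n R}
    (hM : M.IntegralEntries) : (-M).IntegralEntries :=
  fun a b => by simpa using hM a b

theorem IntegralEntries.transpose [Norm R] {M : Matrix m n R} (hM : M.IntegralEntries) :
    Mᵀ.IntegralEntries :=
  fun a b => hM b a

theorem IntegralEntries.smul [SeminormedRing R] {r : R} (hr : ‖r‖ ≤ 1) {M : Matrix m n R}
    (hM : M.IntegralEntries) : (r • M).IntegralEntries :=
  fun a b => (norm_mul_le r (M a b)).trans (mul_le_one₀ hr (norm_nonneg _) (hM a b))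

theorem IntegralEntries.mul [SeminormedRing R] [IsUltrametricDist R] [Fintype n]
    {M : Matrix l n R} {N : Matrix n m R} (hM : M.IntegralEntries) (hN : N.IntegralEntries) :
    (M * N).IntegralEntries := fun a b =>
  IsUltrametricDist.norm_sum_le_of_forall_le_of_nonneg zero_le_one fun c _ =>
    (norm_mul_le _ _).trans (mul_le_one₀ (hM a c) (norm_nonneg _) (hN c b))

theorem integralEntries_fromBlocks_iff [Norm R] {A : Matrix m l R} {B : Matrix m n R}
    {C : Matrix o l R} {D : Matrix o n R} :
    (fromBlocks A B C D).IntegralEntries ↔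
      A.IntegralEntries ∧ B.IntegralEntries ∧ C.IntegralEntries ∧ D.IntegralEntries :=
  ⟨fun h => ⟨fun a b => h (.inl a) (.inl b), fun a b => h (.inl a) (.inr b),
      fun a b => h (.inr a) (.inl b), fun a b => h (.inr a) (.inr b)⟩,
    fun ⟨hA, hB, hC, hD⟩ a b => by
      rcases a with a | a <;> rcases b with b | b
      exacts [hA a b, hB a b, hC a b, hD a b]⟩

theorem IntegralEntries.fromBlocks [Norm R] {A : Matrix m l R} {B : Matrix m n R}
    {C : Matrix o l R} {D : Matrix o n R} (hA : A.IntegralEntries) (hB : B.IntegralEntries)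
    (hC : C.IntegralEntries) (hD : D.IntegralEntries) :
    (Matrix.fromBlocks A B C D).IntegralEntries :=
  integralEntries_fromBlocks_iff.2 ⟨hA, hB, hC, hD⟩

theorem IntegralEntries.unipotent [SeminormedRing R] [NormOneClass R] [DecidableEq n]
    {X : Matrix n n R} (hX : X.IntegralEntries) :
    (Matrix.fromBlocks 1 X 0 1 : Matrix (n ⊕ n) (n ⊕ n) R).IntegralEntries :=
  integralEntries_one.fromBlocks hX integralEntries_zero integralEntries_one

section Symplectic

variable [DecidableEq m] [DecidableEq n] [CommRing R]

theorem fromBlocks_zero_one_neg_one_zero :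
    (fromBlocks 0 1 (-1) 0 : Matrix (n ⊕ n) (n ⊕ n) R) = -J n R := by
  simp [J, fromBlocks_neg]

variable (m n R) in
def blockSwap : Matrix ((m ⊕ n) ⊕ (m ⊕ n)) ((m ⊕ n) ⊕ (m ⊕ n)) R :=
  fromBlocks (fromBlocks 1 0 0 0) (fromBlocks 0 0 0 1) (fromBlocks 0 0 0 (-1)) (fromBlocks 1 0 0 0)

variable (m n) in
/-- The matrix `F_i = diag(1, p, p, 1)`, with `r` in place of `p`. -/
def diagF (r : R) : Matrix ((m ⊕ n) ⊕ (m ⊕ n)) ((m ⊕ n) ⊕ (m ⊕ n)) R :=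
  fromBlocks (fromBlocks 1 0 0 (r • 1)) 0 0 (fromBlocks (r • 1) 0 0 1)

variable [Fintype m] [Fintype n]

theorem transpose_mul_fromBlocks_mul_of_mem_symplecticGroup {M : Matrix (n ⊕ n) (n ⊕ n) R}
    (hM : M ∈ symplecticGroup n R) :
    Mᵀ * fromBlocks 0 1 (-1) 0 * M = fromBlocks 0 1 (-1) 0 := by
  rw [fromBlocks_zero_one_neg_one_zero, Matrix.mul_neg, Matrix.neg_mul,
    SymplecticGroup.mem_iff'.1 hM]

theorem unipotent_mul_unipotent {X Y : Matrix n n R} :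
    (fromBlocks 1 X 0 1 * fromBlocks 1 Y 0 1 : Matrix (n ⊕ n) (n ⊕ n) R) =
      fromBlocks 1 (X + Y) 0 1 := by
  simp [fromBlocks_multiply, add_comm]

theorem unipotent_mem_symplecticGroup {X : Matrix n n R} (hX : X.IsSymm) :
    (fromBlocks 1 X 0 1 : Matrix (n ⊕ n) (n ⊕ n) R) ∈ symplecticGroup n R := by
  simp [SymplecticGroup.mem_iff, J, fromBlocks_transpose, fromBlocks_multiply, hX.eq]

theorem fromBlocks_diag_mul_unipotent (D₁ D₂ X : Matrix n n R) :
    (fromBlocks D₁ 0 0 D₂ * fromBlocks 1 (X * D₂) 0 1 : Matrix (n ⊕ n) (n ⊕ n) R) =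
      fromBlocks 1 (D₁ * X) 0 1 * fromBlocks D₁ 0 0 D₂ := by
  simp [fromBlocks_multiply, Matrix.mul_assoc]

theorem blockSwap_mem_symplecticGroup : blockSwap m n R ∈ symplecticGroup (m ⊕ n) R := by
  simp [blockSwap, SymplecticGroup.mem_iff, J, fromBlocks_transpose, fromBlocks_multiply,
    fromBlocks_neg, fromBlocks_add, ← fromBlocks_one]

theorem blockSwap_mul_mul_transpose (r : R) :
    blockSwap m n R * fromBlocks 1 0 0 (r • 1) * (blockSwap m n R)ᵀ = diagF m n r := by
  simp [blockSwap, diagF, fromBlocks_transpose, fromBlocks_multiply, fromBlocks_smul,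
    fromBlocks_add, ← fromBlocks_one]

theorem diagF_mul_unipotent (r : R) (u₁₁ : Matrix m m R) (u₁₂ : Matrix m n R)
    (u₂₂ : Matrix n n R) :
    diagF m n r * fromBlocks 1 (fromBlocks u₁₁ u₁₂ u₁₂ᵀ u₂₂) 0 1 =
      fromBlocks (fromBlocks 1 0 0 (r • 1)) (fromBlocks u₁₁ u₁₂ (r • u₁₂ᵀ) (r • u₂₂)) 0
        (fromBlocks (r • 1) 0 0 1) := by
  simp [diagF, fromBlocks_multiply]

theorem diagF_mul_unipotent_eq_mul_mul (r : R) (u₁₁ : Matrix m m R) (u₁₂ : Matrix m n R)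
    (u₂₂ : Matrix n n R) :
    diagF m n r * fromBlocks 1 (fromBlocks u₁₁ u₁₂ u₁₂ᵀ u₂₂) 0 1 =
      (fromBlocks 1 (fromBlocks 0 0 0 (r • u₂₂)) 0 1 * blockSwap m n R) *
        fromBlocks 1 0 0 (r • 1) *
        ((blockSwap m n R)ᵀ * fromBlocks 1 (fromBlocks u₁₁ u₁₂ u₁₂ᵀ 0) 0 1) := by
  set D₁ : Matrix (m ⊕ n) (m ⊕ n) R := fromBlocks 1 0 0 (r • 1)
  set D₂ : Matrix (m ⊕ n) (m ⊕ n) R := fromBlocks (r • 1) 0 0 1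
  set U : Matrix ((m ⊕ n) ⊕ (m ⊕ n)) ((m ⊕ n) ⊕ (m ⊕ n)) R :=
    fromBlocks 1 (fromBlocks u₁₁ u₁₂ u₁₂ᵀ 0) 0 1
  calc diagF m n r * fromBlocks 1 (fromBlocks u₁₁ u₁₂ u₁₂ᵀ u₂₂) 0 1
      = fromBlocks D₁ 0 0 D₂ * (fromBlocks 1 (fromBlocks 0 0 0 u₂₂ * D₂) 0 1 * U) := by
        rw [unipotent_mul_unipotent]
        simp [diagF, D₁, D₂, fromBlocks_multiply, fromBlocks_add]
    _ = fromBlocks 1 (D₁ * fromBlocks 0 0 0 u₂₂) 0 1 * fromBlocks D₁ 0 0 D₂ * U := by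
        rw [← Matrix.mul_assoc, fromBlocks_diag_mul_unipotent]
    _ = _ := by
        rw [← diagF, ← blockSwap_mul_mul_transpose]
        simp [D₁, fromBlocks_multiply, Matrix.mul_assoc]

end Symplectic

theorem integralEntries_blockSwap [DecidableEq m] [DecidableEq n] [SeminormedCommRing R]
    [NormOneClass R] : (blockSwap m n R).IntegralEntries := by
  have h₁ : (fromBlocks 1 0 0 0 : Matrix (m ⊕ n) (m ⊕ n) R).IntegralEntries :=
    integralEntries_one.fromBlocks integralEntries_zero integralEntries_zero integralEntries_zero
  have h₂ : (fromBlocks 0 0 0 1 : Matrix (m ⊕ n) (m ⊕ n) R).IntegralEntries :=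
    integralEntries_zero.fromBlocks integralEntries_zero integralEntries_zero integralEntries_one
  have h₃ : (fromBlocks 0 0 0 (-1) : Matrix (m ⊕ n) (m ⊕ n) R).IntegralEntries :=
    integralEntries_zero.fromBlocks integralEntries_zero integralEntries_zero
      integralEntries_one.neg
  exact h₁.fromBlocks h₂ h₃ h₁

end Matrix

theorem stmt_12_general (p : ℕ) [Fact p.Prime] (g i : ℕ)
    (u11 : Matrix (Fin (g - i)) (Fin (g - i)) ℚ_[p])
    (u12 : Matrix (Fin (g - i)) (Fin i) ℚ_[p])
    (u22 : Matrix (Fin i) (Fin i) ℚ_[p])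
    (h11 : u11.IsSymm) (h22 : u22.IsSymm) :
    let J : Matrix ((Fin (g - i) ⊕ Fin i) ⊕ (Fin (g - i) ⊕ Fin i))
        ((Fin (g - i) ⊕ Fin i) ⊕ (Fin (g - i) ⊕ Fin i)) ℚ_[p] :=
      Matrix.fromBlocks 0 1 (-1) 0
    let GSp : Matrix ((Fin (g - i) ⊕ Fin i) ⊕ (Fin (g - i) ⊕ Fin i))
        ((Fin (g - i) ⊕ Fin i) ⊕ (Fin (g - i) ⊕ Fin i)) ℚ_[p] → Prop := fun M =>
      (∀ a b, ‖M a b‖ ≤ 1) ∧ ‖M.det‖ = 1 ∧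
        ∃ lam : ℚ_[p], ‖lam‖ = 1 ∧ Mᵀ * J * M = lam • J
    let A : Matrix (Fin (g - i) ⊕ Fin i) (Fin (g - i) ⊕ Fin i) ℚ_[p] :=
      Matrix.fromBlocks u11 u12 u12ᵀ u22
    let F : Matrix ((Fin (g - i) ⊕ Fin i) ⊕ (Fin (g - i) ⊕ Fin i))
        ((Fin (g - i) ⊕ Fin i) ⊕ (Fin (g - i) ⊕ Fin i)) ℚ_[p] :=
      Matrix.diagonal (Sum.elim
        (Sum.elim (fun _ => 1) (fun _ => (p : ℚ_[p])))
        (Sum.elim (fun _ => (p : ℚ_[p])) (fun _ => 1)))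
    let u : Matrix ((Fin (g - i) ⊕ Fin i) ⊕ (Fin (g - i) ⊕ Fin i))
        ((Fin (g - i) ⊕ Fin i) ⊕ (Fin (g - i) ⊕ Fin i)) ℚ_[p] :=
      Matrix.fromBlocks 1 A 0 1
    let Tp : Matrix ((Fin (g - i) ⊕ Fin i) ⊕ (Fin (g - i) ⊕ Fin i))
        ((Fin (g - i) ⊕ Fin i) ⊕ (Fin (g - i) ⊕ Fin i)) ℚ_[p] :=
      Matrix.fromBlocks 1 0 0 ((p : ℚ_[p]) • 1)
    ((∃ k₁ k₂, GSp k₁ ∧ GSp k₂ ∧ F * u = k₁ * Tp * k₂) ↔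
      ((∀ a b, ‖u11 a b‖ ≤ 1) ∧ (∀ a b, ‖u12 a b‖ ≤ 1) ∧
        (∀ a b, ‖(p : ℚ_[p]) * u22 a b‖ ≤ 1))) := by
  intro J GSp A F u Tp
  have hF : F = diagF _ _ (p : ℚ_[p]) := by
    simp only [F, diagF, ← fromBlocks_diagonal, diagonal_one, smul_one_eq_diagonal]
  have hTp : Tp.IntegralEntries :=
    integralEntries_one.fromBlocks integralEntries_zero integralEntries_zero
      (integralEntries_one.smul Padic.norm_p_lt_one.le)
  have mem_GSp : ∀ k ∈ symplecticGroup _ ℚ_[p], k.IntegralEntries → GSp k := fun k hk hint =>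
    ⟨hint, by rw [SymplecticGroup.det_eq_one hk, norm_one], 1, norm_one,
      by rw [one_smul]; exact transpose_mul_fromBlocks_mul_of_mem_symplecticGroup hk⟩
  constructor
  · rintro ⟨k₁, k₂, ⟨hk₁, -⟩, ⟨hk₂, -⟩, heq⟩
    have hFu : (F * u).IntegralEntries := heq ▸ (IntegralEntries.mul hk₁ hTp).mul hk₂
    rw [hF, diagF_mul_unipotent] at hFu
    obtain ⟨-, hB, -⟩ := integralEntries_fromBlocks_iff.1 hFu
    obtain ⟨H11, H12, -, H22⟩ := integralEntries_fromBlocks_iff.1 hB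
    exact ⟨H11, H12, H22⟩
  · rintro ⟨H11, H12, H22⟩
    refine ⟨_, _, mem_GSp _ ?_ ?_, mem_GSp _ ?_ ?_,
      hF ▸ diagF_mul_unipotent_eq_mul_mul _ _ _ _⟩
    · exact mul_mem (unipotent_mem_symplecticGroup (isSymm_zero.fromBlocks (by simp)
        (h22.smul _))) blockSwap_mem_symplecticGroup
    · exact (IntegralEntries.unipotent (integralEntries_zero.fromBlocks integralEntries_zero
        integralEntries_zero H22)).mul integralEntries_blockSwap
    · exact mul_mem (SymplecticGroup.transpose_mem blockSwap_mem_symplecticGroup)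
        (unipotent_mem_symplecticGroup (h11.fromBlocks rfl isSymm_zero))
    · exact integralEntries_blockSwap.transpose.mul
        (IntegralEntries.unipotent (.fromBlocks H11 H12 (.transpose H12) integralEntries_zero))

theorem stmt_12 (p : ℕ) [Fact p.Prime] (g i : ℕ) (hg : 1 ≤ g) (hig : i ≤ g)
    (u11 : Matrix (Fin (g - i)) (Fin (g - i)) ℚ_[p])
    (u12 : Matrix (Fin (g - i)) (Fin i) ℚ_[p])
    (u22 : Matrix (Fin i) (Fin i) ℚ_[p])
    (h11 : u11.IsSymm) (h22 : u22.IsSymm) :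
    let J : Matrix ((Fin (g - i) ⊕ Fin i) ⊕ (Fin (g - i) ⊕ Fin i))
        ((Fin (g - i) ⊕ Fin i) ⊕ (Fin (g - i) ⊕ Fin i)) ℚ_[p] :=
      Matrix.fromBlocks 0 1 (-1) 0
    let GSp : Matrix ((Fin (g - i) ⊕ Fin i) ⊕ (Fin (g - i) ⊕ Fin i))
        ((Fin (g - i) ⊕ Fin i) ⊕ (Fin (g - i) ⊕ Fin i)) ℚ_[p] → Prop := fun M =>
      (∀ a b, ‖M a b‖ ≤ 1) ∧ ‖M.det‖ = 1 ∧
        ∃ lam : ℚ_[p], ‖lam‖ = 1 ∧ Mᵀ * J * M = lam • J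
    let A : Matrix (Fin (g - i) ⊕ Fin i) (Fin (g - i) ⊕ Fin i) ℚ_[p] :=
      Matrix.fromBlocks u11 u12 u12ᵀ u22
    let F : Matrix ((Fin (g - i) ⊕ Fin i) ⊕ (Fin (g - i) ⊕ Fin i))
        ((Fin (g - i) ⊕ Fin i) ⊕ (Fin (g - i) ⊕ Fin i)) ℚ_[p] :=
      Matrix.diagonal (Sum.elim
        (Sum.elim (fun _ => 1) (fun _ => (p : ℚ_[p])))
        (Sum.elim (fun _ => (p : ℚ_[p])) (fun _ => 1)))
    let u : Matrix ((Fin (g - i) ⊕ Fin i) ⊕ (Fin (g - i) ⊕ Fin i))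
        ((Fin (g - i) ⊕ Fin i) ⊕ (Fin (g - i) ⊕ Fin i)) ℚ_[p] :=
      Matrix.fromBlocks 1 A 0 1
    let Tp : Matrix ((Fin (g - i) ⊕ Fin i) ⊕ (Fin (g - i) ⊕ Fin i))
        ((Fin (g - i) ⊕ Fin i) ⊕ (Fin (g - i) ⊕ Fin i)) ℚ_[p] :=
      Matrix.fromBlocks 1 0 0 ((p : ℚ_[p]) • 1)
    ((∃ k₁ k₂, GSp k₁ ∧ GSp k₂ ∧ F * u = k₁ * Tp * k₂) ↔
      ((∀ a b, ‖u11 a b‖ ≤ 1) ∧ (∀ a b, ‖u12 a b‖ ≤ 1) ∧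
        (∀ a b, ‖(p : ℚ_[p]) * u22 a b‖ ≤ 1))) :=
  stmt_12_general p g i u11 u12 u22 h11 h22
end
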